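/- Corollary (Example 5.3): For all positive integers r, k, the set IMPS(r,k,2) is a closed subset of the space of k×k complex matrices (equivalently, of the tensor space (Fin 2 → Fin k) → ℂ) with its standard topology. -/

import Mathlib

/-!
The trace form `(M, N) ↦ trace (M * N)` on `r × r` complex matrices is a nondegenerate symmetric
bilinear form on a space of dimension `r²`, so `IMPS(r,k,2)` is the set of `k × k` Gram matrices of
such a form. Over an algebraically closed field of characteristic `≠ 2` these are exactly the
symmetric matrices of rank at most the dimension: a symmetric `T` of rank `≤ n` factors as
`T = X Xᵀ` with `X` having `n` columns (split off one square `w wᵀ` at a time), and the columns of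
`X` are then realised in an orthonormal basis of the form. Both symmetry and the bound on the rank
are closed conditions, the latter because rank is lower semicontinuous.
-/

open Module

namespace Matrix

variable {K ι : Type*} [Field K] [Fintype ι]

theorem IsSymm.exists_dotProduct_mulVec_self_ne_zero [DecidableEq ι] [Invertible (2 : K)]
    {T : Matrix ι ι K} (hT : T.IsSymm) (h0 : T ≠ 0) : ∃ v, v ⬝ᵥ T *ᵥ v ≠ 0 := by
  obtain ⟨v, hv⟩ := LinearMap.BilinForm.exists_bilinForm_self_ne_zero
    ((LinearEquiv.map_ne_zero_iff toBilin').2 h0)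
    (LinearMap.BilinForm.isSymm_iff.1 (isSymm_toBilin'_iff_isSymm.2 hT))
  exact ⟨v, by rwa [toBilin'_apply'] at hv⟩

/-- The deflated matrix kills `v` and everything `T` kills, so its kernel is strictly larger. -/
theorem IsSymm.rank_sub_vecMulVec_lt {T : Matrix ι ι K} (hT : T.IsSymm) {v : ι → K}
    (hv : v ⬝ᵥ T *ᵥ v ≠ 0) :
    (T - (v ⬝ᵥ T *ᵥ v)⁻¹ • vecMulVec (T *ᵥ v) (T *ᵥ v)).rank < T.rank := by
  set c := v ⬝ᵥ T *ᵥ v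
  set T' := T - c⁻¹ • vecMulVec (T *ᵥ v) (T *ᵥ v)
  have hdot : ∀ x, (T *ᵥ v) ⬝ᵥ x = v ⬝ᵥ T *ᵥ x := fun x => by
    rw [dotProduct_mulVec, ← vecMul_transpose, hT.eq]
  have hT' : ∀ x, T' *ᵥ x = T *ᵥ x - (c⁻¹ * (v ⬝ᵥ T *ᵥ x)) • T *ᵥ v := fun x => by
    simp [T', sub_mulVec, smul_mulVec, vecMulVec_mulVec, hdot, smul_smul]
  have hker : LinearMap.ker T.mulVecLin < LinearMap.ker T'.mulVecLin := by
    refine SetLike.lt_iff_le_and_exists.2 ⟨fun x hx => ?_, v, ?_, fun hTv => ?_⟩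
    · simp_all
    · simp [hT', inv_mul_cancel₀ hv, c]
    · rw [LinearMap.mem_ker, mulVecLin_apply] at hTv
      simp [c, hTv] at hv
  have := Submodule.finrank_lt_finrank_of_lt hker
  have := LinearMap.finrank_range_add_finrank_ker T.mulVecLin
  have := LinearMap.finrank_range_add_finrank_ker T'.mulVecLin
  unfold rank
  omega

theorem IsSymm.exists_eq_vecMulVec_self_add [DecidableEq ι] [IsAlgClosed K] [Invertible (2 : K)]
    {T : Matrix ι ι K} (hT : T.IsSymm) (h0 : T ≠ 0) :
    ∃ (w : ι → K) (T' : Matrix ι ι K), T'.IsSymm ∧ T'.rank < T.rank ∧ T = vecMulVec w w + T' := by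
  obtain ⟨v, hv⟩ := hT.exists_dotProduct_mulVec_self_ne_zero h0
  obtain ⟨s, hs⟩ := IsAlgClosed.exists_eq_mul_self (v ⬝ᵥ T *ᵥ v)
  refine ⟨s⁻¹ • T *ᵥ v, _, hT.sub (IsSymm.smul (transpose_vecMulVec _ _) _),
    hT.rank_sub_vecMulVec_lt hv, ?_⟩
  rw [smul_vecMulVec, vecMulVec_smul, smul_smul, ← mul_inv, ← hs, add_sub_cancel]

theorem IsSymm.exists_eq_mul_transpose_of_rank_le [DecidableEq ι] [IsAlgClosed K]
    [Invertible (2 : K)] {T : Matrix ι ι K} (hT : T.IsSymm) {n : ℕ} (h : T.rank ≤ n) :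
    ∃ X : Matrix ι (Fin n) K, T = X * Xᵀ := by
  induction n generalizing T with
  | zero =>
    obtain rfl | h0 := eq_or_ne T 0
    · exact ⟨0, by simp⟩
    obtain ⟨-, T', -, hlt, -⟩ := hT.exists_eq_vecMulVec_self_add h0
    omega
  | succ n ih =>
    obtain rfl | h0 := eq_or_ne T 0
    · exact ⟨0, by simp⟩
    obtain ⟨w, T', hT', hlt, rfl⟩ := hT.exists_eq_vecMulVec_self_add h0
    obtain ⟨X, rfl⟩ := ih hT' (by omega)
    exact ⟨of fun i => Fin.cons (w i) (X i), by
      ext i j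
      simp [mul_apply, vecMulVec_apply, Fin.sum_univ_succ]⟩

theorem isClosed_setOf_rank_le {𝕜 m n : Type*} [NontriviallyNormedField 𝕜] [CompleteSpace 𝕜]
    [Fintype m] [Fintype n] [DecidableEq n] (k : ℕ) :
    IsClosed {A : Matrix m n 𝕜 | A.rank ≤ k} := by
  let toCLM : Matrix m n 𝕜 →ₗ[𝕜] (n → 𝕜) →L[𝕜] (m → 𝕜) :=
    LinearMap.toContinuousLinearMap.toLinearMap ∘ₗ toLin'.toLinearMap
  have hrank (A : Matrix m n 𝕜) : A.rank ≤ k ↔ ¬ ↑(k + 1) ≤ (toLin' A).rank := by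
    rw [LinearMap.rank, ← finrank_eq_rank, Nat.cast_le, not_le, Nat.lt_succ_iff]
    rfl
  have hset : {A : Matrix m n 𝕜 | A.rank ≤ k} =
      toCLM ⁻¹' {f | ↑(k + 1) ≤ (f : (n → 𝕜) →ₗ[𝕜] (m → 𝕜)).rank}ᶜ :=
    Set.ext hrank
  rw [hset]
  exact (isOpen_setOfPred_nat_le_rank (k + 1)).isClosed_compl.preimage
    toCLM.continuous_of_finiteDimensional

section traceForm

variable {ι K : Type*} [Fintype ι] [CommRing K]

variable (ι K) in
def traceForm : LinearMap.BilinForm K (Matrix ι ι K) :=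
  (LinearMap.mul K (Matrix ι ι K)).compr₂ (traceLinearMap ι K K)

@[simp]
theorem traceForm_apply (M N : Matrix ι ι K) : traceForm ι K M N = trace (M * N) := rfl

theorem traceForm_isSymm : (traceForm ι K).IsSymm :=
  ⟨fun M N => trace_mul_comm M N⟩

theorem traceForm_separatingLeft : (traceForm ι K).SeparatingLeft := fun M hM =>
  ext_iff_trace_mul_right.2 fun N => by simpa using hM N

end traceForm

end Matrix

namespace LinearMap.BilinForm

variable {K V : Type*} [Field K] [AddCommGroup V] [Module K V] [FiniteDimensional K V]

theorem exists_orthonormal_of_isAlgClosed [IsAlgClosed K] [Invertible (2 : K)]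
    {B : LinearMap.BilinForm K V} (hB : B.IsSymm) (hB' : B.SeparatingLeft) :
    ∃ e : Fin (finrank K V) → V, ∀ a b, B (e a) (e b) = if a = b then 1 else 0 := by
  obtain ⟨v, hv⟩ := exists_orthogonal_basis (isSymm_iff.1 hB)
  choose s hs using fun a => IsAlgClosed.exists_eq_mul_self (B (v a) (v a))
  refine ⟨fun a => (s a)⁻¹ • v a, fun a b => ?_⟩
  obtain rfl | hab := eq_or_ne a b
  · have : s a ≠ 0 := by
      rintro h
      exact hv.not_isOrtho_basis_self_of_separatingLeft hB' a (by simp [hs, h])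
    simp only [map_smul, smul_apply, hs, smul_eq_mul, ↓reduceIte]
    field_simp
  · simp [hab, hv hab]

variable {ι : Type*} [Fintype ι]

theorem rank_le_finrank_of_gram (B : LinearMap.BilinForm K V) (v : ι → V) {T : Matrix ι ι K}
    (hT : ∀ i j, T i j = B (v i) (v j)) : T.rank ≤ finrank K V := by
  have hfac : T.mulVecLin = LinearMap.pi (fun i => B (v i)) ∘ₗ Fintype.linearCombination K v := by
    ext x i
    simp [Matrix.mulVec, dotProduct, hT, Fintype.linearCombination_apply, map_sum, mul_comm]
  calc T.rank = finrank K (LinearMap.range T.mulVecLin) := rfl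
    _ ≤ finrank K (LinearMap.range (Fintype.linearCombination K v)) := by
      rw [hfac, LinearMap.range_comp]
      exact Submodule.finrank_map_le _ _
    _ ≤ finrank K V := Submodule.finrank_le _

theorem exists_gram_of_rank_le [DecidableEq ι] [IsAlgClosed K] [Invertible (2 : K)]
    {B : LinearMap.BilinForm K V} (hB : B.IsSymm) (hB' : B.SeparatingLeft) {T : Matrix ι ι K}
    (hT : T.IsSymm) (h : T.rank ≤ finrank K V) : ∃ v : ι → V, ∀ i j, T i j = B (v i) (v j) := by
  obtain ⟨X, rfl⟩ := hT.exists_eq_mul_transpose_of_rank_le h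
  obtain ⟨e, he⟩ := exists_orthonormal_of_isAlgClosed hB hB'
  refine ⟨fun i => ∑ a, X i a • e a, fun i j => ?_⟩
  simp [Matrix.mul_apply, map_sum, he, mul_comm]

theorem exists_gram_iff [DecidableEq ι] [IsAlgClosed K] [Invertible (2 : K)]
    {B : LinearMap.BilinForm K V} (hB : B.IsSymm) (hB' : B.SeparatingLeft) {T : Matrix ι ι K} :
    (∃ v : ι → V, ∀ i j, T i j = B (v i) (v j)) ↔ T.IsSymm ∧ T.rank ≤ finrank K V := by
  refine ⟨fun ⟨v, hv⟩ => ⟨Matrix.IsSymm.ext fun i j => ?_, rank_le_finrank_of_gram B v hv⟩,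
    fun ⟨hT, h⟩ => exists_gram_of_rank_le hB hB' hT h⟩
  rw [hv, hv, hB.eq]

end LinearMap.BilinForm

theorem imps_two_isClosed_general (r k : ℕ) :
    IsClosed {T : Matrix (Fin k) (Fin k) ℂ |
      ∃ M : Fin k → Matrix (Fin r) (Fin r) ℂ,
        ∀ i j : Fin k, T i j = Matrix.trace (M i * M j)} := by
  have hset : {T : Matrix (Fin k) (Fin k) ℂ |
      ∃ M : Fin k → Matrix (Fin r) (Fin r) ℂ, ∀ i j : Fin k, T i j = Matrix.trace (M i * M j)} =
      {T | T.IsSymm ∧ T.rank ≤ r * r} := Set.ext fun T => by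
    simpa [finrank_matrix] using LinearMap.BilinForm.exists_gram_iff (T := T)
      (B := Matrix.traceForm (Fin r) ℂ) Matrix.traceForm_isSymm Matrix.traceForm_separatingLeft
  rw [hset]
  exact (isClosed_eq continuous_id.matrix_transpose continuous_id).inter
    (Matrix.isClosed_setOf_rank_le _)

/-- Example 5.3 (corollary): for all positive integers `r, k`, the set `IMPS(r,k,2)`
is a closed subset of the space of `k × k` complex matrices. -/
theorem imps_two_isClosed (r k : ℕ) (hr : 0 < r) (hk : 0 < k) :
    IsClosed {T : Matrix (Fin k) (Fin k) ℂ |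
      ∃ M : Fin k → Matrix (Fin r) (Fin r) ℂ,
        ∀ i j : Fin k, T i j = Matrix.trace (M i * M j)} :=
  imps_two_isClosed_general r k
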